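/- Let Λ be a k-graph. Define the skeleton E_Λ (vertices Λ^0, edges the paths of degree e_i for each i, coloured by i) and let C_Λ be the collection of squares φ_λ for λ ∈ Λ^{e_i+e_j} (i ≠ j) given by φ_λ(n) = λ(n) and φ_λ(n + v_i) = λ(n, n+e_i). Then C_Λ is a complete collection of squares in E_Λ which is associative. -/

import Mathlib

namespace Paper


/-- A `k`-graph structure on object type `Obj` and morphism type `Hom`:
a countable category with a degree functor to `ℕ^k` satisfying the
unique factorisation property.  `comp μ ν` is the composite "μ then ν",
meaningful when `src μ = rng ν`. -/
structure KGraph (k : ℕ) (Obj Hom : Type) where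
  src : Hom → Obj
  rng : Hom → Obj
  comp : Hom → Hom → Hom
  idm : Obj → Hom
  d : Hom → Fin k → ℕ
  countObj : Countable Obj
  countHom : Countable Hom
  src_comp : ∀ μ ν, src μ = rng ν → src (comp μ ν) = src ν
  rng_comp : ∀ μ ν, src μ = rng ν → rng (comp μ ν) = rng μ
  comp_assoc : ∀ l μ ν, src l = rng μ → src μ = rng ν →
    comp (comp l μ) ν = comp l (comp μ ν)
  src_idm : ∀ v, src (idm v) = v
  rng_idm : ∀ v, rng (idm v) = v
  comp_idm : ∀ μ, comp μ (idm (src μ)) = μ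
  idm_comp : ∀ μ, comp (idm (rng μ)) μ = μ
  d_comp : ∀ μ ν, src μ = rng ν → d (comp μ ν) = d μ + d ν
  d_idm : ∀ v, d (idm v) = 0
  factor : ∀ (lam : Hom) (m n : Fin k → ℕ), d lam = m + n →
    ∃! p : Hom × Hom, src p.1 = rng p.2 ∧ comp p.1 p.2 = lam ∧ d p.1 = m ∧ d p.2 = n

variable {k : ℕ} {Obj Hom : Type}

/-- `IsSegment Λ lam seg p q` says that `seg = lam(p,q)`, i.e. `seg` is the middle
factor of `lam` in a factorisation `lam = a ⬝ seg ⬝ b` with `d a = p`, `d seg = q - p`. -/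
def IsSegment (Λ : KGraph k Obj Hom) (lam seg : Hom) (p q : Fin k → ℕ) : Prop :=
  ∃ a b : Hom, Λ.src a = Λ.rng seg ∧ Λ.src seg = Λ.rng b ∧
    Λ.comp a (Λ.comp seg b) = lam ∧ Λ.d a = p ∧ Λ.d seg = q - p

/-- Aperiodicity in the finite-path formulation of Robertson–Sims. -/
def Aperiodic (Λ : KGraph k Obj Hom) : Prop :=
  ∀ (v : Obj) (m n : Fin k → ℕ), m ≠ n → ∃ lam : Hom,
    Λ.rng lam = v ∧ m ⊔ n ≤ Λ.d lam ∧
    ∀ s1 s2 : Hom, IsSegment Λ lam s1 m (m + (Λ.d lam - (m ⊔ n))) →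
      IsSegment Λ lam s2 n (n + (Λ.d lam - (m ⊔ n))) → s1 ≠ s2

def NoSources (Λ : KGraph k Obj Hom) : Prop :=
  ∀ (v : Obj) (i : Fin k), ∃ h : Hom, Λ.rng h = v ∧ Λ.d h = Pi.single i 1

def RowFinite (Λ : KGraph k Obj Hom) : Prop :=
  ∀ (v : Obj) (i : Fin k), {h : Hom | Λ.rng h = v ∧ Λ.d h = Pi.single i 1}.Finite

def Cofinal (Λ : KGraph k Obj Hom) : Prop :=
  ∀ v w : Obj, ∃ n : Fin k → ℕ, ∀ lam : Hom, Λ.rng lam = w → Λ.d lam = n →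
    ∃ μ : Hom, Λ.rng μ = v ∧ Λ.src μ = Λ.src lam

/-- A degree-preserving functor between `k`-graphs. -/
structure KFunctor {O H O' H' : Type} (Λ : KGraph k O H) (Γ : KGraph k O' H') where
  onObj : O → O'
  onHom : H → H'
  rng_comm : ∀ h, Γ.rng (onHom h) = onObj (Λ.rng h)
  src_comm : ∀ h, Γ.src (onHom h) = onObj (Λ.src h)
  idm_comm : ∀ v, onHom (Λ.idm v) = Γ.idm (onObj v)
  comp_comm : ∀ μ ν, Λ.src μ = Λ.rng ν → onHom (Λ.comp μ ν) = Γ.comp (onHom μ) (onHom ν)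
  d_comm : ∀ h, Γ.d (onHom h) = Λ.d h

/-- An infinite path in a `k`-graph: a `k`-graph morphism from `Ω_k`. -/
structure InfPath (Λ : KGraph k Obj Hom) where
  vert : (Fin k → ℕ) → Obj
  seg : ∀ p q : Fin k → ℕ, p ≤ q → Hom
  rng_seg : ∀ p q h, Λ.rng (seg p q h) = vert p
  src_seg : ∀ p q h, Λ.src (seg p q h) = vert q
  d_seg : ∀ p q h, Λ.d (seg p q h) = q - p
  comp_seg : ∀ p q r (h1 : p ≤ q) (h2 : q ≤ r),
    Λ.comp (seg p q h1) (seg q r h2) = seg p r (h1.trans h2)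

/-- The shift `σ^p` on infinite paths. -/
def InfPath.shift (Λ : KGraph k Obj Hom) (p : Fin k → ℕ) (x : InfPath Λ) : InfPath Λ where
  vert q := x.vert (p + q)
  seg q r h := x.seg (p + q) (p + r) (add_le_add (le_refl p) h)
  rng_seg q r h := x.rng_seg _ _ _
  src_seg q r h := x.src_seg _ _ _
  d_seg q r h := by
    rw [x.d_seg]
    funext i
    simp [Nat.add_sub_add_left]
  comp_seg q r t h1 h2 := x.comp_seg _ _ _ _ _



/-- A `k`-coloured (directed) graph. -/
structure ColouredGraph (k : ℕ) where
  V : Type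
  E : Type
  r : E → V
  s : E → V
  c : E → Fin k

variable {k : ℕ}

/-- The model grid `E_{k,m}`: vertices `{n ≤ m}`, an edge of colour `i`
from `n + e_i` to `n` whenever `n + e_i ≤ m`. -/
def grid (k : ℕ) (m : Fin k → ℕ) : ColouredGraph k where
  V := {n : Fin k → ℕ // n ≤ m}
  E := {p : (Fin k → ℕ) × Fin k // p.1 + Pi.single p.2 1 ≤ m}
  r e := ⟨e.1.1, le_trans (le_add_of_nonneg_right zero_le) e.2⟩
  s e := ⟨e.1.1 + Pi.single e.1.2 1, e.2⟩
  c e := e.1.2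

/-- A coloured-graph morphism. -/
structure CGM (E F : ColouredGraph k) where
  onV : E.V → F.V
  onE : E.E → F.E
  r_comm : ∀ e, F.r (onE e) = onV (E.r e)
  s_comm : ∀ e, F.s (onE e) = onV (E.s e)
  c_comm : ∀ e, F.c (onE e) = E.c e

/-- Composition of coloured-graph morphisms. -/
def CGM.compose {E F G : ColouredGraph k} (g : CGM F G) (f : CGM E F) : CGM E G where
  onV := g.onV ∘ f.onV
  onE := g.onE ∘ f.onE
  r_comm e := by simp [Function.comp, g.r_comm, f.r_comm]
  s_comm e := by simp [Function.comp, g.s_comm, f.s_comm]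
  c_comm e := by simp [Function.comp, g.c_comm, f.c_comm]

/-- The range `λ(0)` of a coloured-graph morphism defined on a grid. -/
def gRng {E : ColouredGraph k} {m : Fin k → ℕ} (lam : CGM (grid k m) E) : E.V :=
  lam.onV ⟨0, zero_le⟩

/-- The source `λ(m)` of a coloured-graph morphism defined on a grid. -/
def gSrc {E : ColouredGraph k} {m : Fin k → ℕ} (lam : CGM (grid k m) E) : E.V :=
  lam.onV ⟨m, le_refl m⟩

/-- The translated restriction `λ|*_{[p, p+m']}` of `λ : E_{k,M} → E`. -/
def restrictTo {E : ColouredGraph k} {M : Fin k → ℕ} (lam : CGM (grid k M) E)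
    (p m' : Fin k → ℕ) (h : p + m' ≤ M) : CGM (grid k m') E where
  onV n := lam.onV ⟨p + n.1, le_trans (add_le_add (le_refl p) n.2) h⟩
  onE e := lam.onE ⟨(p + e.1.1, e.1.2), by
    rw [add_assoc]; exact le_trans (add_le_add (le_refl p) e.2) h⟩
  r_comm e := lam.r_comm _
  s_comm e := by
    exact (lam.s_comm _).trans (congrArg lam.onV (Subtype.ext (add_assoc p e.1.1 _)))
  c_comm e := lam.c_comm _

/-- A coloured-graph morphism from some grid into `E`, bundled with its degree. -/
def MorphOf (E : ColouredGraph k) : Type := Σ m : Fin k → ℕ, CGM (grid k m) E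

/-- The shape (abelianized colouring) of a finite path, as an element of `ℕ^k`. -/
def colourVec (E : ColouredGraph k) (x : List E.E) : Fin k → ℕ :=
  (x.map (fun e => Pi.single (E.c e) 1)).sum

/-- A list of edges is a path when consecutive edges are composable. -/
def IsPathList (E : ColouredGraph k) (x : List E.E) : Prop :=
  x.Chain' (fun e f => E.s e = E.r f)

/-- `x` traverses `λ`: the edges of `x` match those of `λ` along the staircase
determined by the colour sequence of `x`. -/
def Traverses {E : ColouredGraph k} {m : Fin k → ℕ} (lam : CGM (grid k m) E)
    (x : List E.E) : Prop :=
  colourVec E x = m ∧ ∀ (l : ℕ) (hl : l < x.length),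
    ∃ h : colourVec E (x.take l) + Pi.single (E.c (x.get ⟨l, hl⟩)) 1 ≤ m,
      lam.onE ⟨(colourVec E (x.take l), E.c (x.get ⟨l, hl⟩)), h⟩ = x.get ⟨l, hl⟩

/-- A bundled grid morphism is a square when its degree is `e_i + e_j` with `i ≠ j`. -/
def IsSquarePair {E : ColouredGraph k} (φ : MorphOf E) : Prop :=
  ∃ i j : Fin k, i ≠ j ∧ φ.1 = Pi.single i 1 + Pi.single j 1

/-- A complete collection of squares. -/
def Complete (E : ColouredGraph k) (C : Set (MorphOf E)) : Prop :=
  (∀ φ ∈ C, IsSquarePair φ) ∧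
  ∀ e f : E.E, E.s e = E.r f → E.c e ≠ E.c f →
    ∃! φ : MorphOf E, φ ∈ C ∧ Traverses φ.2 [e, f]

/-- `CRel C e f f' e'` means `ef ∼_C f'e'`: the paths `ef` and `f'e'` traverse a
common square of `C`, with `f'` of the colour of `f` and `e'` of the colour of `e`. -/
def CRel (E : ColouredGraph k) (C : Set (MorphOf E)) (e f f' e' : E.E) : Prop :=
  E.c f' = E.c f ∧ E.c e' = E.c e ∧
  ∃ φ ∈ C, Traverses φ.2 [e, f] ∧ Traverses φ.2 [f', e']

/-- Associativity of a complete collection of squares. -/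
def Associative (E : ColouredGraph k) (C : Set (MorphOf E)) : Prop :=
  ∀ f g h f1 f2 g1 g2 h1 h2 f1' f2' g1' g2' h1' h2' : E.E,
    E.s f = E.r g → E.s g = E.r h →
    E.c f ≠ E.c g → E.c g ≠ E.c h → E.c f ≠ E.c h →
    CRel E C f g g1' f1' → CRel E C f1' h h1' f2' → CRel E C g1' h1' h2' g2' →
    CRel E C g h h1 g1 → CRel E C f h1 h2 f1 → CRel E C f1 g1 g2 f2 →
    f2 = f2' ∧ g2 = g2' ∧ h2 = h2'

/-- `λ` is `C`-compatible: every square occurring in `λ` belongs to `C`. -/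
def CComp (E : ColouredGraph k) (C : Set (MorphOf E)) {M : Fin k → ℕ}
    (lam : CGM (grid k M) E) : Prop :=
  ∀ (p : Fin k → ℕ) (i j : Fin k), i ≠ j →
    ∀ h : p + (Pi.single i 1 + Pi.single j 1) ≤ M,
      (⟨Pi.single i 1 + Pi.single j 1,
        restrictTo lam p (Pi.single i 1 + Pi.single j 1) h⟩ : MorphOf E) ∈ C

/-- A finite path in a coloured graph, remembering its range vertex (so that
length-zero paths are vertices). -/
structure FinPath (E : ColouredGraph k) where
  rng : E.V
  edges : List E.E
  chain : edges.Chain' (fun e f => E.s e = E.r f)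
  head_rng : ∀ e ∈ edges.head?, E.r e = rng

/-- Source vertex of a finite path. -/
def FinPath.src {E : ColouredGraph k} (x : FinPath E) : E.V :=
  (x.edges.getLast?).elim x.rng E.s

/-- One application of a commuting square: replace a consecutive bicoloured pair
by its `C`-equivalent pair. -/
def SwapStep (E : ColouredGraph k) (C : Set (MorphOf E)) (x y : List E.E) : Prop :=
  ∃ (l r : List E.E) (e f f' e' : E.E),
    x = l ++ e :: f :: r ∧ y = l ++ f' :: e' :: r ∧ CRel E C e f f' e'

/-- The relation on finite paths generating the equivalence `∼`. -/
def PathRel (E : ColouredGraph k) (C : Set (MorphOf E)) (x y : FinPath E) : Prop :=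
  x.rng = y.rng ∧ SwapStep E C x.edges y.edges


/-- The skeleton of a `k`-graph: vertices are the objects and edges are the
morphisms of degree `e_i`, coloured by `i`. -/
noncomputable def skel {O H : Type} (Λ : KGraph k O H) : ColouredGraph k where
  V := O
  E := {h : H // ∃ i : Fin k, Λ.d h = Pi.single i 1}
  r e := Λ.rng e.1
  s e := Λ.src e.1
  c e := Classical.choose e.2

/-- The collection `C_Λ` of commuting squares of a `k`-graph: the squares
`φ_λ` for `λ ∈ Λ^{e_i+e_j}` (`i ≠ j`), given on vertices by `φ_λ(n) = λ(n)`
and on edges by `φ_λ(n + v_l) = λ(n, n + e_l)`. -/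
noncomputable def skelSquares {O H : Type} (Λ : KGraph k O H) :
    Set (MorphOf (skel Λ)) :=
  {ψ | ∃ (i j : Fin k), i ≠ j ∧ ∃ lam : H,
    Λ.d lam = Pi.single i 1 + Pi.single j 1 ∧
    ψ.1 = Pi.single i 1 + Pi.single j 1 ∧
    (∀ (n : Fin k → ℕ) (hn : n ≤ ψ.1), ∃ a : H,
      IsSegment Λ lam a 0 n ∧ ψ.2.onV ⟨n, hn⟩ = Λ.src a) ∧
    (∀ (n : Fin k → ℕ) (l : Fin k) (hn : n + Pi.single l 1 ≤ ψ.1),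
      IsSegment Λ lam (ψ.2.onE ⟨(n, l), hn⟩).1 n (n + Pi.single l 1))}


/-! A square `φ_λ` of the skeleton is determined by `λ`: its vertices and edges are segments of
`λ`, and segments are unique by unique factorisation. A bicoloured path `ef` traverses `φ_λ`
exactly when `λ = ef`, which gives completeness. For associativity, both ways of rearranging a
tricoloured path `fgh` produce factorisations `h₂ (g₂ f₂)` of the single morphism `fgh` whose
factors have the same degrees, so unique factorisation makes the final edges agree. -/

attribute [ext] CGM

namespace KGraph

variable {O H : Type} {Λ : KGraph k O H}

theorem factor_unique {a b a' b' : H} (hab : Λ.src a = Λ.rng b) (hab' : Λ.src a' = Λ.rng b')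
    (h : Λ.comp a b = Λ.comp a' b') (hd : Λ.d a = Λ.d a') : a = a' ∧ b = b' := by
  have hdb : Λ.d b = Λ.d b' := by
    have := congrArg Λ.d h
    rw [Λ.d_comp _ _ hab, Λ.d_comp _ _ hab', hd] at this
    exact add_left_cancel this
  obtain ⟨_, -, huniq⟩ := Λ.factor (Λ.comp a b) (Λ.d a) (Λ.d b) (Λ.d_comp _ _ hab)
  exact Prod.ext_iff.mp ((huniq (a, b) ⟨hab, rfl, rfl, rfl⟩).trans
    (huniq (a', b') ⟨hab', h.symm, hd.symm, hdb.symm⟩).symm)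

theorem eq_idm_of_d_eq_zero {a : H} (ha : Λ.d a = 0) : a = Λ.idm (Λ.rng a) :=
  (factor_unique (Λ.rng_idm _).symm (Λ.src_idm _) ((Λ.comp_idm a).trans (Λ.idm_comp a).symm)
    (ha.trans (Λ.d_idm _).symm)).1

theorem comp_eq_self_of_d_eq_zero_left {a x : H} (ha : Λ.d a = 0) (h : Λ.src a = Λ.rng x) :
    Λ.comp a x = x := by
  have hsrc : Λ.src a = Λ.rng a := by rw [eq_idm_of_d_eq_zero ha, Λ.src_idm, Λ.rng_idm]
  rw [eq_idm_of_d_eq_zero ha, ← hsrc, h, Λ.idm_comp]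

theorem comp_eq_self_of_d_eq_zero_right {b x : H} (hb : Λ.d b = 0) (h : Λ.src x = Λ.rng b) :
    Λ.comp x b = x := by
  rw [eq_idm_of_d_eq_zero hb, ← h, Λ.comp_idm]

end KGraph

section Segment

variable {O H : Type} {Λ : KGraph k O H}

theorem exists_isSegment {lam : H} {p q : Fin k → ℕ} (hpq : p ≤ q) (hq : q ≤ Λ.d lam) :
    ∃ s, IsSegment Λ lam s p q := by
  obtain ⟨⟨a, t⟩, ⟨hat, hlam, hda, hdt⟩, -⟩ :=
    Λ.factor lam p (Λ.d lam - p) (add_tsub_cancel_of_le (hpq.trans hq)).symm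
  obtain ⟨⟨s, b⟩, ⟨hsb, ht, hds, -⟩, -⟩ :=
    Λ.factor t (q - p) (Λ.d lam - q) (by rw [hdt, add_comm, tsub_add_tsub_cancel hq hpq])
  subst ht
  exact ⟨s, a, b, by rwa [Λ.rng_comp _ _ hsb] at hat, hsb, hlam, hda, hds⟩

theorem IsSegment.unique {lam s s' : H} {p q : Fin k → ℕ} (hs : IsSegment Λ lam s p q)
    (hs' : IsSegment Λ lam s' p q) : s = s' := by
  obtain ⟨a, b, has, hsb, rfl, hda, hds⟩ := hs
  obtain ⟨a', b', has', hsb', h, hda', hds'⟩ := hs'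
  have hrest := (KGraph.factor_unique (by rwa [Λ.rng_comp _ _ hsb])
    (by rwa [Λ.rng_comp _ _ hsb']) h.symm (hda.trans hda'.symm)).2
  exact (KGraph.factor_unique hsb hsb' hrest (hds.trans hds'.symm)).1

theorem isSegment_zero_iff {lam s : H} {q : Fin k → ℕ} :
    IsSegment Λ lam s 0 q ↔ ∃ b, Λ.src s = Λ.rng b ∧ Λ.comp s b = lam ∧ Λ.d s = q := by
  constructor
  · rintro ⟨a, b, has, hsb, rfl, hda, hds⟩
    refine ⟨b, hsb, ?_, by rw [hds, tsub_zero]⟩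
    exact (KGraph.comp_eq_self_of_d_eq_zero_left hda (by rwa [Λ.rng_comp _ _ hsb])).symm
  · rintro ⟨b, hsb, rfl, hds⟩
    refine ⟨Λ.idm (Λ.rng s), b, Λ.src_idm _, hsb, ?_, Λ.d_idm _, by rw [hds, tsub_zero]⟩
    rw [← Λ.rng_comp _ _ hsb]
    exact Λ.idm_comp _

theorem isSegment_d_iff {lam s : H} {p : Fin k → ℕ} :
    IsSegment Λ lam s p (Λ.d lam) ↔ ∃ a, Λ.src a = Λ.rng s ∧ Λ.comp a s = lam ∧ Λ.d a = p := by
  constructor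
  · rintro ⟨a, b, has, hsb, hlam, hda, hds⟩
    have hdlam : Λ.d lam = p + (Λ.d lam - p) + Λ.d b := by
      rw [← hds, ← hda, add_assoc, ← Λ.d_comp _ _ hsb,
        ← Λ.d_comp _ _ (by rwa [Λ.rng_comp _ _ hsb]), hlam]
    have hp : p ≤ Λ.d lam := by
      rw [hdlam]
      exact le_add_right le_self_add
    rw [add_tsub_cancel_of_le hp] at hdlam
    refine ⟨a, has, ?_, hda⟩
    rw [← hlam, KGraph.comp_eq_self_of_d_eq_zero_right (left_eq_add.mp hdlam) hsb]
  · rintro ⟨a, has, rfl, hda⟩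
    refine ⟨a, Λ.idm (Λ.src s), has, (Λ.rng_idm _).symm, by rw [Λ.comp_idm], hda, ?_⟩
    rw [Λ.d_comp _ _ has, hda, add_tsub_cancel_left]

theorem IsSegment.src_eq_of_comp_eq {lam s c b : H} {p q : Fin k → ℕ}
    (hs : IsSegment Λ lam s p q) (hpq : p ≤ q) (hcb : Λ.src c = Λ.rng b)
    (hlam : Λ.comp c b = lam) (hdc : Λ.d c = q) : Λ.src s = Λ.src c := by
  obtain ⟨a, b', has, hsb', rfl, hda, hds⟩ := hs
  have hac : Λ.comp a s = c :=
    (KGraph.factor_unique (by rwa [Λ.src_comp _ _ has]) hcb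
      (by rw [Λ.comp_assoc _ _ _ has hsb', hlam])
      (by rw [Λ.d_comp _ _ has, hda, hds, add_tsub_cancel_of_le hpq, hdc])).1
  rw [← hac, Λ.src_comp _ _ has]

theorem IsSegment.rng_eq_of_comp_eq {lam t c b : H} {q r : Fin k → ℕ}
    (ht : IsSegment Λ lam t q r) (hcb : Λ.src c = Λ.rng b) (hlam : Λ.comp c b = lam)
    (hdc : Λ.d c = q) : Λ.rng t = Λ.src c := by
  obtain ⟨a, b', hat, htb, rfl, hda, -⟩ := ht
  obtain ⟨rfl, -⟩ :=
    KGraph.factor_unique (by rwa [Λ.rng_comp _ _ htb]) hcb hlam.symm (hda.trans hdc.symm)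
  exact hat.symm

open Classical in
/-- The segment `λ(p, q)`; a junk value unless `p ≤ q ≤ d λ`. -/
noncomputable def KGraph.seg (Λ : KGraph k O H) (lam : H) (p q : Fin k → ℕ) : H :=
  if h : ∃ s, IsSegment Λ lam s p q then h.choose else lam

theorem isSegment_seg {lam : H} {p q : Fin k → ℕ} (hpq : p ≤ q) (hq : q ≤ Λ.d lam) :
    IsSegment Λ lam (Λ.seg lam p q) p q := by
  have h := exists_isSegment hpq hq
  rw [KGraph.seg, dif_pos h]
  exact h.choose_spec

theorem IsSegment.seg_eq {lam s : H} {p q : Fin k → ℕ} (hs : IsSegment Λ lam s p q) :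
    Λ.seg lam p q = s := by
  have h : ∃ s, IsSegment Λ lam s p q := ⟨s, hs⟩
  rw [KGraph.seg, dif_pos h]
  exact h.choose_spec.unique hs

end Segment

theorem traverses_pair_iff {E : ColouredGraph k} {m : Fin k → ℕ} {φ : CGM (grid k m) E}
    {e f : E.E} :
    Traverses φ [e, f] ↔ Pi.single (E.c e) 1 + Pi.single (E.c f) 1 = m ∧
      (∃ h, φ.onE ⟨(0, E.c e), h⟩ = e) ∧ ∃ h, φ.onE ⟨(Pi.single (E.c e) 1, E.c f), h⟩ = f := by
  refine and_congr (by simp [colourVec]) ⟨fun h => ⟨h 0 (by simp), h 1 (by simp)⟩, ?_⟩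
  rintro ⟨h0, h1⟩ (_ | _ | l) hl
  · exact h0
  · exact h1
  · simp at hl

section Skeleton

variable {O H : Type} {Λ : KGraph k O H}

theorem skel_d_eq (e : (skel Λ).E) : Λ.d e.1 = Pi.single ((skel Λ).c e) 1 :=
  Classical.choose_spec e.2

theorem skel_c_eq {e : (skel Λ).E} {i : Fin k} (h : Λ.d e.1 = Pi.single i 1) :
    (skel Λ).c e = i := by
  simpa [Pi.single_apply] using congrFun ((skel_d_eq e).symm.trans h) ((skel Λ).c e)

theorem skel_d_eq_of_c_eq {e e' : (skel Λ).E} (h : (skel Λ).c e = (skel Λ).c e') :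
    Λ.d e.1 = Λ.d e'.1 := by
  rw [skel_d_eq, skel_d_eq, h]

theorem skel_d_comp {e f : (skel Λ).E} (h : Λ.src e.1 = Λ.rng f.1) :
    Λ.d (Λ.comp e.1 f.1) = Pi.single ((skel Λ).c e) 1 + Pi.single ((skel Λ).c f) 1 := by
  rw [Λ.d_comp _ _ h, skel_d_eq, skel_d_eq]

theorem d_seg_add_single {lam : H} {n : Fin k → ℕ} {l : Fin k}
    (h : n + Pi.single l 1 ≤ Λ.d lam) : Λ.d (Λ.seg lam n (n + Pi.single l 1)) = Pi.single l 1 := by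
  obtain ⟨-, -, -, -, -, -, hd⟩ := isSegment_seg le_self_add h
  rw [hd, add_tsub_cancel_left]

/-- The grid morphism `φ_λ : E_{k, d λ} → E_Λ`, with `φ_λ(n) = λ(n)` and
`φ_λ(n + v_l) = λ(n, n + e_l)`. -/
noncomputable def gridMorph (Λ : KGraph k O H) (lam : H) : CGM (grid k (Λ.d lam)) (skel Λ) where
  onV n := Λ.src (Λ.seg lam 0 n.1)
  onE e := ⟨Λ.seg lam e.1.1 (e.1.1 + Pi.single e.1.2 1), e.1.2, d_seg_add_single e.2⟩
  r_comm e := by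
    obtain ⟨b, hcb, hlam, hdc⟩ :=
      isSegment_zero_iff.mp (isSegment_seg zero_le (le_self_add.trans e.2))
    exact (isSegment_seg le_self_add e.2).rng_eq_of_comp_eq hcb hlam hdc
  s_comm e := by
    obtain ⟨b, hcb, hlam, hdc⟩ := isSegment_zero_iff.mp (isSegment_seg zero_le e.2)
    exact (isSegment_seg le_self_add e.2).src_eq_of_comp_eq le_self_add hcb hlam hdc
  c_comm e := skel_c_eq (d_seg_add_single e.2)

def IsGridMorphOf (Λ : KGraph k O H) (lam : H) {m : Fin k → ℕ}
    (ψ : CGM (grid k m) (skel Λ)) : Prop :=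
  (∀ (n : Fin k → ℕ) (hn : n ≤ m), ∃ a : H, IsSegment Λ lam a 0 n ∧ ψ.onV ⟨n, hn⟩ = Λ.src a) ∧
  ∀ (n : Fin k → ℕ) (l : Fin k) (hn : n + Pi.single l 1 ≤ m),
    IsSegment Λ lam (ψ.onE ⟨(n, l), hn⟩).1 n (n + Pi.single l 1)

theorem isGridMorphOf_gridMorph (lam : H) : IsGridMorphOf Λ lam (gridMorph Λ lam) :=
  ⟨fun _ hn => ⟨_, isSegment_seg zero_le hn, rfl⟩, fun _ _ hn => isSegment_seg le_self_add hn⟩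

theorem IsGridMorphOf.unique {lam : H} {m : Fin k → ℕ} {ψ ψ' : CGM (grid k m) (skel Λ)}
    (h : IsGridMorphOf Λ lam ψ) (h' : IsGridMorphOf Λ lam ψ') : ψ = ψ' := by
  refine CGM.ext (funext fun ⟨n, hn⟩ => ?_) (funext fun ⟨⟨n, l⟩, hn⟩ => ?_)
  · obtain ⟨a, ha, hψ⟩ := h.1 n hn
    obtain ⟨a', ha', hψ'⟩ := h'.1 n hn
    rw [hψ, hψ', ha.unique ha']
  · exact Subtype.ext ((h.2 n l hn).unique (h'.2 n l hn))

theorem mem_skelSquares_iff {ψ : MorphOf (skel Λ)} :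
    ψ ∈ skelSquares Λ ↔ IsSquarePair ψ ∧ ∃ lam, Λ.d lam = ψ.1 ∧ IsGridMorphOf Λ lam ψ.2 := by
  constructor
  · rintro ⟨i, j, hij, lam, hd, hψ, hV, hE⟩
    exact ⟨⟨i, j, hij, hψ⟩, lam, hd.trans hψ.symm, hV, hE⟩
  · rintro ⟨⟨i, j, hij, hψ⟩, lam, hd, hV, hE⟩
    exact ⟨i, j, hij, lam, hd.trans hψ, hψ, hV, hE⟩

theorem IsGridMorphOf.comp_eq_of_traverses {lam : H} {ψ : CGM (grid k (Λ.d lam)) (skel Λ)}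
    {e f : (skel Λ).E} (hψ : IsGridMorphOf Λ lam ψ) (htr : Traverses ψ [e, f]) :
    Λ.src e.1 = Λ.rng f.1 ∧ Λ.comp e.1 f.1 = lam := by
  obtain ⟨hd, ⟨he, hψe⟩, ⟨hf, hψf⟩⟩ := traverses_pair_iff.mp htr
  have hse := hψ.2 _ _ he
  rw [hψe, zero_add] at hse
  have hsf := hψ.2 _ _ hf
  rw [hψf, hd] at hsf
  obtain ⟨b, heb, hlam, hde⟩ := isSegment_zero_iff.mp hse
  obtain ⟨a, haf, hlam', hda⟩ := isSegment_d_iff.mp hsf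
  obtain ⟨rfl, rfl⟩ := KGraph.factor_unique heb haf (hlam.trans hlam'.symm) (hde.trans hda.symm)
  exact ⟨heb, hlam⟩

theorem traverses_gridMorph {e f : (skel Λ).E} (h : Λ.src e.1 = Λ.rng f.1) :
    Traverses (gridMorph Λ (Λ.comp e.1 f.1)) [e, f] := by
  have hd := skel_d_comp h
  refine traverses_pair_iff.mpr ⟨hd.symm, ⟨by rw [hd, zero_add]; exact le_self_add, ?_⟩,
    ⟨hd.ge, ?_⟩⟩
  · have hse : IsSegment Λ (Λ.comp e.1 f.1) e.1 0 (0 + Pi.single ((skel Λ).c e) 1) := by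
      rw [zero_add]
      exact isSegment_zero_iff.mpr ⟨f.1, h, rfl, skel_d_eq e⟩
    exact Subtype.ext hse.seg_eq
  · have hsf : IsSegment Λ (Λ.comp e.1 f.1) f.1 (Pi.single ((skel Λ).c e) 1)
        (Pi.single ((skel Λ).c e) 1 + Pi.single ((skel Λ).c f) 1) := by
      rw [← hd]
      exact isSegment_d_iff.mpr ⟨e.1, h, rfl, skel_d_eq e⟩
    exact Subtype.ext hsf.seg_eq

theorem complete_skelSquares (Λ : KGraph k O H) : Complete (skel Λ) (skelSquares Λ) := by
  refine ⟨fun φ hφ => (mem_skelSquares_iff.mp hφ).1, fun e f hef hc => ?_⟩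
  refine ⟨⟨_, gridMorph Λ (Λ.comp e.1 f.1)⟩, ⟨mem_skelSquares_iff.mpr
    ⟨⟨_, _, hc, skel_d_comp hef⟩, _, rfl, isGridMorphOf_gridMorph _⟩, traverses_gridMorph hef⟩, ?_⟩
  rintro ⟨m, ψ⟩ ⟨hψ, htr⟩
  obtain ⟨-, lam, hm, hlam⟩ := mem_skelSquares_iff.mp hψ
  subst hm
  obtain ⟨-, rfl⟩ := hlam.comp_eq_of_traverses htr
  exact congrArg (Sigma.mk _) (hlam.unique (isGridMorphOf_gridMorph _))

theorem CRel.skel_comp_eq {e f f' e' : (skel Λ).E} (h : CRel (skel Λ) (skelSquares Λ) e f f' e') :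
    Λ.src e.1 = Λ.rng f.1 ∧ Λ.src f'.1 = Λ.rng e'.1 ∧ Λ.comp e.1 f.1 = Λ.comp f'.1 e'.1 := by
  obtain ⟨-, -, ⟨m, ψ⟩, hψ, htr, htr'⟩ := h
  obtain ⟨-, lam, hm, hlam⟩ := mem_skelSquares_iff.mp hψ
  subst hm
  obtain ⟨hef, hlam_ef⟩ := hlam.comp_eq_of_traverses htr
  obtain ⟨hfe, hlam_fe⟩ := hlam.comp_eq_of_traverses htr'
  exact ⟨hef, hfe, hlam_ef.trans hlam_fe.symm⟩

theorem associative_skelSquares (Λ : KGraph k O H) : Associative (skel Λ) (skelSquares Λ) := by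
  rintro f g h f1 f2 g1 g2 h1 h2 f1' f2' g1' g2' h1' h2' hfg hgh - - - r1 r2 r3 r4 r5 r6
  obtain ⟨-, s1, e1⟩ := r1.skel_comp_eq
  obtain ⟨s2l, s2, e2⟩ := r2.skel_comp_eq
  obtain ⟨s3l, s3, e3⟩ := r3.skel_comp_eq
  obtain ⟨-, s4, e4⟩ := r4.skel_comp_eq
  obtain ⟨s5l, s5, e5⟩ := r5.skel_comp_eq
  obtain ⟨s6l, s6, e6⟩ := r6.skel_comp_eq
  have s3' : Λ.src g2'.1 = Λ.rng f2'.1 := by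
    rw [← Λ.src_comp _ _ s3, ← e3, Λ.src_comp _ _ s3l, s2]
  have s5' : Λ.src h2.1 = Λ.rng (Λ.comp g2.1 f2.1) := by
    rw [← e6, Λ.rng_comp _ _ s6l, s5]
  have route1 : Λ.comp (Λ.comp f.1 g.1) h.1 = Λ.comp h2'.1 (Λ.comp g2'.1 f2'.1) := by
    rw [e1, Λ.comp_assoc _ _ _ s1 s2l, e2, ← Λ.comp_assoc _ _ _ s3l s2, e3,
      Λ.comp_assoc _ _ _ s3 s3']
  have route2 : Λ.comp (Λ.comp f.1 g.1) h.1 = Λ.comp h2.1 (Λ.comp g2.1 f2.1) := by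
    rw [Λ.comp_assoc _ _ _ hfg hgh, e4, ← Λ.comp_assoc _ _ _ s5l s4, e5,
      Λ.comp_assoc _ _ _ s5 s6l, e6]
  obtain ⟨hh, hgf⟩ := KGraph.factor_unique s5' (by rwa [Λ.rng_comp _ _ s3'])
    (route2.symm.trans route1)
    (skel_d_eq_of_c_eq ((r5.1.trans r4.1).trans (r3.1.trans r2.1).symm))
  obtain ⟨hg, hf⟩ := KGraph.factor_unique s6 s3' hgf
    (skel_d_eq_of_c_eq ((r6.1.trans r4.2.1).trans (r3.2.1.trans r1.1).symm))
  exact ⟨Subtype.ext hf, Subtype.ext hg, Subtype.ext hh⟩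

end Skeleton

/-- The collection `C_Λ` of commuting squares of a `k`-graph is a complete
collection of squares in the skeleton `E_Λ`, and it is associative. -/
theorem skelSquares_complete_associative {k : ℕ} {O H : Type} (Λ : KGraph k O H) :
    Complete (skel Λ) (skelSquares Λ) ∧ Associative (skel Λ) (skelSquares Λ) :=
  ⟨complete_skelSquares Λ, associative_skelSquares Λ⟩

end Paper
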